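/- Let $A$ and $B$ be vector spaces over a field $F$ and let $V \subseteq \mathrm{Hom}_F(A,B)$ be a subspace. Then there exists a vector space $Q$ and a linear map $\rho \colon A \to B \otimes Q$ with $V = \{(\mathrm{id}_B\otimes q^*)\circ\rho \mid q^* \in Q^*\}$ if and only if $V$ is pointwise finite dimensional and closed in the finite topology on $\mathrm{Hom}_F(A,B)$. -/

import Mathlib

/-! A tensor `t ∈ B ⊗ Q` involves only finitely many vectors of `B`, so `q ↦ (id ⊗ q) t` has
finite-dimensional range. Testing against all functionals on `B`, membership of `f` in the
cosupport becomes a system of linear equations `q (x_p) = c_p` in `q ∈ Q^*`; a point of the closure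
satisfies every finite subsystem, and such a system is solvable as soon as all its finite
subsystems are, so the cosupport is closed.

Conversely take `Q = V^*`. Pointwise finite dimensionality makes `v ↦ v a` a finite-rank map
`V → B`, hence the image of a tensor in `B ⊗ V^*`, and these tensors can be chosen linearly in `a`
since `A` is projective. The resulting cosupport contains `V` (take `q = ev_v`) and lies in the
closure of `V`, because any `q ∈ V^{**}` agrees with some `ev_v` on a given finite-dimensional
subspace of `V^*`. -/

open TensorProduct

variable {F : Type*} [Field F] {A : Type uA} {B : Type uB} [AddCommGroup A] [Module F A]
  [AddCommGroup B] [Module F B]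

/-- The linear map `Q^* → Hom(A,B)` sending `q^*` to `(id_B ⊗ q^*) ∘ ρ`. -/
noncomputable def cosuppL {Q : Type*} [AddCommGroup Q] [Module F Q] (ρ : A →ₗ[F] B ⊗[F] Q) :
    Module.Dual F Q →ₗ[F] (A →ₗ[F] B) where
  toFun q := (TensorProduct.rid F B).toLinearMap ∘ₗ LinearMap.lTensor B q ∘ₗ ρ
  map_add' q₁ q₂ := by
    simp [LinearMap.lTensor_add, LinearMap.add_comp, LinearMap.comp_add]
  map_smul' c q := by
    simp [LinearMap.lTensor_smul, LinearMap.smul_comp, LinearMap.comp_smul]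

/-- The cosupport of `ρ : A → B ⊗ Q`. -/
noncomputable def lcosupp {Q : Type*} [AddCommGroup Q] [Module F Q] (ρ : A →ₗ[F] B ⊗[F] Q) :
    Submodule F (A →ₗ[F] B) :=
  LinearMap.range (cosuppL ρ)

/-- The finite topology on `Hom_F(A,B)`: pointwise convergence with `B` discrete. -/
def finiteTopology (F A B : Type*) [Field F] [AddCommGroup A] [Module F A]
    [AddCommGroup B] [Module F B] : TopologicalSpace (A →ₗ[F] B) :=
  TopologicalSpace.induced (fun f : A →ₗ[F] B => (f : A → B))
    (@Pi.topologicalSpace A (fun _ => B) (fun _ => ⊥))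

section partialEval

variable {R M N : Type*} [CommSemiring R] [AddCommMonoid M] [Module R M]
  [AddCommMonoid N] [Module R N]

/-- `t ↦ (q ↦ (id ⊗ q) t)`: a tensor of `M ⊗ N` as a map on `N^*`. -/
noncomputable def partialEval : M ⊗[R] N →ₗ[R] Module.Dual R N →ₗ[R] M :=
  (LinearMap.llcomp R _ _ _ (TensorProduct.rid R M).toLinearMap ∘ₗ LinearMap.lTensorHom M).flip

theorem partialEval_apply (t : M ⊗[R] N) (q : Module.Dual R N) :
    partialEval t q = TensorProduct.rid R M (LinearMap.lTensor M q t) := rfl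

theorem partialEval_lTensor {N' : Type*} [AddCommMonoid N'] [Module R N'] (g : N →ₗ[R] N')
    (t : M ⊗[R] N) (q : Module.Dual R N') :
    partialEval (LinearMap.lTensor M g t) q = partialEval t (q ∘ₗ g) := by
  rw [partialEval_apply, partialEval_apply, LinearMap.lTensor_comp_apply]

theorem apply_partialEval (φ : Module.Dual R M) (t : M ⊗[R] N) (q : Module.Dual R N) :
    φ (partialEval t q) = q (TensorProduct.lid R N (LinearMap.rTensor N φ t)) := by
  induction t with
  | zero => simp
  | tmul m n => simp [partialEval_apply, mul_comm]
  | add x y hx hy => simp only [map_add, LinearMap.add_apply, hx, hy]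

end partialEval

theorem cosuppL_apply {Q : Type*} [AddCommGroup Q] [Module F Q] (ρ : A →ₗ[F] B ⊗[F] Q)
    (q : Module.Dual F Q) (a : A) : cosuppL ρ q a = partialEval (ρ a) q := rfl

theorem finiteDimensional_range_partialEval {Q : Type*} [AddCommGroup Q] [Module F Q]
    (t : B ⊗[F] Q) : FiniteDimensional F (LinearMap.range (partialEval (R := F) t)) := by
  induction t with
  | zero => rw [map_zero, LinearMap.range_zero]; infer_instance
  | tmul b m =>
    refine Submodule.finiteDimensional_of_le (S₂ := Submodule.span F {b}) ?_
    rintro _ ⟨q, rfl⟩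
    simpa [partialEval_apply] using Submodule.smul_mem _ (q m) (Submodule.mem_span_singleton_self b)
  | add x y hx hy =>
    refine Submodule.finiteDimensional_of_le
      (S₂ := LinearMap.range (partialEval x) ⊔ LinearMap.range (partialEval y)) ?_
    rintro _ ⟨q, rfl⟩
    simpa using Submodule.add_mem_sup (LinearMap.mem_range_self _ q) (LinearMap.mem_range_self _ q)

theorem exists_dual_forall_apply_eq_of_finset {Q P : Type*} [AddCommGroup Q] [Module F Q]
    (g : P → Q) (c : P → F)
    (h : ∀ s : Finset P, ∃ q : Module.Dual F Q, ∀ p ∈ s, q (g p) = c p) :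
    ∃ q : Module.Dual F Q, ∀ p, q (g p) = c p := by
  let T := Finsupp.linearCombination F g
  let C := Finsupp.linearCombination F c
  have hC : C ∈ (LinearMap.ker T).dualAnnihilator := by
    rw [Submodule.mem_dualAnnihilator]
    intro l hl
    obtain ⟨q, hq⟩ := h l.support
    calc C l = q (T l) := by
          simp only [T, C, Finsupp.linearCombination_apply, map_finsuppSum, map_smul]
          exact Finsupp.sum_congr fun p hp => by rw [hq p hp]
      _ = 0 := by rw [LinearMap.mem_ker.mp hl, map_zero]
  rw [← LinearMap.range_dualMap_eq_dualAnnihilator_ker] at hC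
  obtain ⟨q, hq⟩ := hC
  exact ⟨q, fun p => by simpa [T, C] using LinearMap.congr_fun hq (Finsupp.single p 1)⟩

theorem mem_closure_finiteTopology {S : Set (A →ₗ[F] B)} {f : A →ₗ[F] B} :
    f ∈ @closure _ (finiteTopology F A B) S ↔ ∀ s : Finset A, ∃ g ∈ S, ∀ a ∈ s, g a = f a := by
  let _ : TopologicalSpace B := ⊥
  have : DiscreteTopology B := ⟨rfl⟩
  let _ := finiteTopology F A B
  rw [mem_closure_iff]
  constructor
  · intro h s
    obtain ⟨g, hg, hgS⟩ := h ((fun g : A →ₗ[F] B => (g : A → B)) ⁻¹' (Set.pi ↑s fun a => {f a}))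
      (isOpen_induced (isOpen_set_pi s.finite_toSet fun a _ => isOpen_discrete _))
      (fun a _ => rfl)
    exact ⟨g, hgS, hg⟩
  · intro h U hU hfU
    obtain ⟨U', hU', rfl⟩ := isOpen_induced_iff.mp hU
    obtain ⟨s, u, hu, hsub⟩ := isOpen_pi_iff.mp hU' _ hfU
    obtain ⟨g, hgS, hg⟩ := h s
    refine ⟨g, hsub fun a ha => ?_, hgS⟩
    simp only [hg a ha]
    exact (hu a ha).2

theorem finiteDimensional_map_applyₗ_lcosupp {Q : Type*} [AddCommGroup Q] [Module F Q]
    (ρ : A →ₗ[F] B ⊗[F] Q) (a : A) :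
    FiniteDimensional F ((lcosupp ρ).map ((LinearMap.applyₗ : A →ₗ[F] (A →ₗ[F] B) →ₗ[F] B) a)) := by
  rw [lcosupp, ← LinearMap.range_comp]
  exact finiteDimensional_range_partialEval (ρ a)

theorem isClosed_lcosupp {Q : Type*} [AddCommGroup Q] [Module F Q] (ρ : A →ₗ[F] B ⊗[F] Q) :
    @IsClosed _ (finiteTopology F A B) (lcosupp ρ : Set (A →ₗ[F] B)) := by
  classical
  let _ := finiteTopology F A B
  refine isClosed_of_closure_subset fun f hf => ?_
  rw [mem_closure_finiteTopology] at hf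
  -- test `f a` against every functional on `B`; each finite set of tests is met by some `q`
  obtain ⟨q, hq⟩ := exists_dual_forall_apply_eq_of_finset
    (fun p : A × Module.Dual F B => TensorProduct.lid F Q (LinearMap.rTensor Q p.2 (ρ p.1)))
    (fun p => p.2 (f p.1)) fun s => by
      obtain ⟨_, ⟨q, rfl⟩, hg⟩ := hf (s.image Prod.fst)
      exact ⟨q, fun p hp => by
        rw [← apply_partialEval, ← cosuppL_apply, hg p.1 (Finset.mem_image_of_mem _ hp)]⟩
  refine ⟨q, LinearMap.ext fun a => ?_⟩
  rw [cosuppL_apply, ← sub_eq_zero, ← Module.forall_dual_apply_eq_zero_iff F]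
  intro φ
  rw [map_sub, apply_partialEval, sub_eq_zero]
  exact hq (a, φ)

section dual

variable {M : Type*} [AddCommGroup M] [Module F M]

theorem small_dual [Small.{u} M] : Small.{u} (Module.Dual F M) := by
  rcases subsingleton_or_nontrivial M with hM | hM
  · have : Subsingleton (Module.Dual F M) :=
      ⟨fun φ ψ => LinearMap.ext fun m => by rw [Subsingleton.elim m 0, map_zero, map_zero]⟩
    infer_instance
  · obtain ⟨m, hm⟩ := exists_ne (0 : M)
    have : Small.{u} F := small_of_injective (smul_left_injective F hm)
    exact small_of_injective (f := fun φ : Module.Dual F M => (φ : M → F)) DFunLike.coe_injective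

theorem exists_forall_mem_apply_eq (L : Submodule F (Module.Dual F M)) [FiniteDimensional F L]
    (q : Module.Dual F (Module.Dual F M)) : ∃ m : M, ∀ φ ∈ L, φ m = q φ := by
  obtain ⟨x, hx⟩ := (Subspace.quotDualCoannihilatorToDual_bijective L).2 (q ∘ₗ L.subtype)
  obtain ⟨m, rfl⟩ := Submodule.Quotient.mk_surjective _ x
  exact ⟨m, fun φ hφ => LinearMap.congr_fun hx ⟨φ, hφ⟩⟩

/-- `b ⊗ φ ↦ (m ↦ φ m • b)`. -/
noncomputable def tensorDualToHom : B ⊗[F] Module.Dual F M →ₗ[F] (M →ₗ[F] B) :=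
  LinearMap.lcomp F B (Module.Dual.eval F M) ∘ₗ partialEval

theorem tensorDualToHom_apply (t : B ⊗[F] Module.Dual F M) (m : M) :
    tensorDualToHom t m = partialEval t (Module.Dual.eval F M m) := rfl

theorem mem_range_tensorDualToHom (g : M →ₗ[F] B) [FiniteDimensional F (LinearMap.range g)] :
    g ∈ LinearMap.range (tensorDualToHom (F := F) (B := B) (M := M)) := by
  let w := Module.finBasis F (LinearMap.range g)
  refine ⟨∑ i, (w i : B) ⊗ₜ (w.coord i ∘ₗ g.rangeRestrict), LinearMap.ext fun m => ?_⟩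
  simp only [map_sum, LinearMap.sum_apply, tensorDualToHom_apply, partialEval_apply,
    LinearMap.lTensor_tmul, TensorProduct.rid_tmul, Module.Dual.eval_apply, LinearMap.comp_apply,
    Module.Basis.coord_apply]
  have := congrArg Subtype.val (w.sum_repr (g.rangeRestrict m))
  push_cast at this
  exact this

end dual

section reverse

variable {V : Submodule F (A →ₗ[F] B)}

theorem exists_partialEval_eval_eq
    (hfd : ∀ a : A,
      FiniteDimensional F (V.map ((LinearMap.applyₗ : A →ₗ[F] (A →ₗ[F] B) →ₗ[F] B) a))) :
    ∃ ρ : A →ₗ[F] B ⊗[F] Module.Dual F V,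
      ∀ a (v : V), partialEval (ρ a) (Module.Dual.eval F V v) = (v : A →ₗ[F] B) a := by
  have hmem : ∀ a, V.subtype.flip a ∈ LinearMap.range (tensorDualToHom (F := F) (B := B)) := by
    intro a
    have : FiniteDimensional F (LinearMap.range (V.subtype.flip a)) := by
      rw [show V.subtype.flip a = LinearMap.applyₗ a ∘ₗ V.subtype from rfl, LinearMap.range_comp,
        Submodule.range_subtype]
      exact hfd a
    exact mem_range_tensorDualToHom _
  obtain ⟨ρ, hρ⟩ := Module.projective_lifting_property tensorDualToHom.rangeRestrict
    (LinearMap.codRestrict _ V.subtype.flip hmem) (LinearMap.surjective_rangeRestrict _)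
  exact ⟨ρ, fun a v => congr((($hρ a : LinearMap.range _) : V →ₗ[F] B) v)⟩

variable {ρ : A →ₗ[F] B ⊗[F] Module.Dual F V}

theorem le_lcosupp
    (hρ : ∀ a (v : V), partialEval (ρ a) (Module.Dual.eval F V v) = (v : A →ₗ[F] B) a) :
    V ≤ lcosupp ρ :=
  fun f hf => ⟨Module.Dual.eval F V ⟨f, hf⟩, LinearMap.ext fun a => hρ a ⟨f, hf⟩⟩

theorem lcosupp_subset_closure
    (hρ : ∀ a (v : V), partialEval (ρ a) (Module.Dual.eval F V v) = (v : A →ₗ[F] B) a) :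
    (lcosupp ρ : Set (A →ₗ[F] B)) ⊆ @closure _ (finiteTopology F A B) V := by
  rintro _ ⟨q, rfl⟩
  rw [mem_closure_finiteTopology]
  intro s
  obtain ⟨L, _, hL⟩ := TensorProduct.exists_finite_submodule_right_of_setFinite
    (ρ '' s) (s.finite_toSet.image _)
  obtain ⟨v, hv⟩ := exists_forall_mem_apply_eq L q
  refine ⟨v, v.2, fun a ha => ?_⟩
  obtain ⟨t, ht⟩ := hL (Set.mem_image_of_mem _ ha)
  rw [← hρ a v, cosuppL_apply, ← ht, partialEval_lTensor, partialEval_lTensor]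
  congr 1
  ext ⟨φ, hφ⟩
  exact hv φ hφ

end reverse

theorem lcosupp_lTensor_comp {Q Q' : Type*} [AddCommGroup Q] [Module F Q] [AddCommGroup Q']
    [Module F Q'] (e : Q ≃ₗ[F] Q') (ρ : A →ₗ[F] B ⊗[F] Q) :
    lcosupp (LinearMap.lTensor B e.toLinearMap ∘ₗ ρ) = lcosupp ρ := by
  have : cosuppL (LinearMap.lTensor B e.toLinearMap ∘ₗ ρ) = cosuppL ρ ∘ₗ e.dualMap.toLinearMap :=
    LinearMap.ext fun q => LinearMap.ext fun a => partialEval_lTensor _ (ρ a) q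
  rw [lcosupp, lcosupp, this, LinearMap.range_comp_of_range_eq_top _ (LinearEquiv.range _)]

/-- A subspace `V ⊆ Hom_F(A,B)` is the cosupport of some linear map `ρ : A → B ⊗ Q`
if and only if `V` is pointwise finite dimensional and closed in the finite topology. -/
theorem dualizable_iff_pointwiseFD_and_closed (V : Submodule F (A →ₗ[F] B)) :
    (∃ (Q : ModuleCat.{max uA uB} F) (ρ : A →ₗ[F] B ⊗[F] Q), lcosupp ρ = V) ↔
      ((∀ a : A,
          FiniteDimensional F (V.map ((LinearMap.applyₗ : A →ₗ[F] (A →ₗ[F] B) →ₗ[F] B) a))) ∧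
        @IsClosed _ (finiteTopology F A B) (V : Set (A →ₗ[F] B))) := by
  constructor
  · rintro ⟨Q, ρ, rfl⟩
    exact ⟨finiteDimensional_map_applyₗ_lcosupp ρ, isClosed_lcosupp ρ⟩
  · rintro ⟨hfd, hcl⟩
    obtain ⟨ρ, hρ⟩ := exists_partialEval_eval_eq hfd
    let _ := finiteTopology F A B
    have hV : lcosupp ρ = V := le_antisymm
      (fun f hf => hcl.closure_subset (lcosupp_subset_closure hρ hf)) (le_lcosupp hρ)
    have : Small.{max uA uB} (Module.Dual F V) := small_dual
    let e := Shrink.linearEquiv.{max uA uB} F (Module.Dual F V)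
    exact ⟨ModuleCat.of F (Shrink (Module.Dual F V)), LinearMap.lTensor B e.symm.toLinearMap ∘ₗ ρ,
      (lcosupp_lTensor_comp e.symm ρ).trans hV⟩
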